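/- Let F : ℂ → ℂ be an even entire function of exponential type at most 2πδ with ∫_ℝ |F(x)| |x|^{N−1} dx < ∞ for a positive integer N. Then the radial extension ψ_N(F) restricted to ℝ^N belongs to L¹(ℝ^N) ∩ L²(ℝ^N). -/

import Mathlib

open MeasureTheory Real Complex Filter Topology Metric Set


lemma aux_exp_quad_le (B ε x : ℝ) (hε : 0 < ε) :
    Real.exp (B * |x| - ε * x ^ 2) ≤ Real.exp (B ^ 2 / (2 * ε)) * Real.exp (-(ε / 2) * x ^ 2) := by
  rw [← Real.exp_add]
  apply Real.exp_le_exp.2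
  have h1 : 0 ≤ (B - ε * |x|) ^ 2 := sq_nonneg _
  have h2 : |x| ^ 2 = x ^ 2 := _root_.sq_abs x
  have h3 : 2 * ε * (B * |x|) ≤ B ^ 2 + ε ^ 2 * x ^ 2 := by nlinarith
  have h4 : 0 < 2 * ε := by linarith
  rw [div_add' _ _ _ (ne_of_gt h4), le_div_iff₀ h4]
  nlinarith

lemma aux_integrable_exp_quad (B ε : ℝ) (hε : 0 < ε) :
    Integrable (fun x : ℝ => Real.exp (B * |x| - ε * x ^ 2)) := by
  have : Integrable (fun x : ℝ => Real.exp (B ^ 2 / (2 * ε)) * Real.exp (-(ε / 2) * x ^ 2)) :=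
    (integrable_exp_neg_mul_sq (by linarith)).const_mul _
  refine this.mono' ?_ ?_
  · exact (Continuous.rexp (by continuity)).aestronglyMeasurable
  · filter_upwards with x
    rw [Real.norm_eq_abs, abs_of_pos (Real.exp_pos _)]
    exact aux_exp_quad_le B ε x hε

lemma aux_integral_exp_quad_le (B ε : ℝ) (hε : 0 < ε) :
    ∫ x : ℝ, Real.exp (B * |x| - ε * x ^ 2) ≤
      Real.exp (B ^ 2 / (2 * ε)) * Real.sqrt (2 * π / ε) := by
  have h := integral_gaussian (ε / 2)
  have h2 : π / (ε / 2) = 2 * π / ε := by field_simp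
  calc ∫ x : ℝ, Real.exp (B * |x| - ε * x ^ 2)
      ≤ ∫ x : ℝ, Real.exp (B ^ 2 / (2 * ε)) * Real.exp (-(ε / 2) * x ^ 2) := by
        refine integral_mono (aux_integrable_exp_quad B ε hε)
          ((integrable_exp_neg_mul_sq (by linarith)).const_mul _) ?_
        intro x; exact aux_exp_quad_le B ε x hε
    _ = Real.exp (B ^ 2 / (2 * ε)) * Real.sqrt (2 * π / ε) := by
        rw [MeasureTheory.integral_const_mul, h, h2]

lemma aux_shift_line (G : ℂ → ℂ) (hG : Differentiable ℂ G) (y₀ c B ε : ℝ) (hε : 0 < ε)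
    (hbd : ∀ x y : ℝ, |y| ≤ |y₀| → ‖G (x + y * Complex.I)‖ ≤ c * Real.exp (B * |x| - ε * x ^ 2)) :
    ∫ x : ℝ, G (x + y₀ * Complex.I) = ∫ x : ℝ, G x := by
  have hInt : ∀ y : ℝ, |y| ≤ |y₀| → Integrable (fun x : ℝ => G (x + y * Complex.I)) := by
    intro y hy
    refine ((aux_integrable_exp_quad B ε hε).const_mul c).mono' ?_ ?_
    · exact (hG.continuous.comp (by continuity)).aestronglyMeasurable
    · filter_upwards with x using hbd x y hy
  have key : ∀ R : ℝ,
      (∫ x in (-R)..R, G x) - (∫ x in (-R)..R, G (x + y₀ * Complex.I)) =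
        Complex.I • (∫ y in (0:ℝ)..y₀, G (-R + y * Complex.I)) -
        Complex.I • (∫ y in (0:ℝ)..y₀, G (R + y * Complex.I)) := by
    intro R
    have h := Complex.integral_boundary_rect_eq_zero_of_differentiableOn G (-R : ℂ)
      ((R : ℂ) + y₀ * Complex.I) (hG.differentiableOn)
    simp only [Complex.ofReal_neg, Complex.neg_re, Complex.ofReal_re, Complex.neg_im,
      Complex.ofReal_im, neg_zero, Complex.add_re, Complex.mul_re, Complex.I_re, mul_zero,
      Complex.ofReal_im, Complex.I_im, mul_one, zero_sub, Complex.add_im, Complex.mul_im,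
      zero_mul, add_zero, zero_add, sub_zero, Complex.ofReal_zero, neg_neg] at h
    rw [sub_eq_iff_eq_add] at *
    linear_combination h
  have hA : Tendsto (fun R : ℝ => ∫ x in (-R)..R, G x) atTop (𝓝 (∫ x : ℝ, G x)) := by
    have h0 : Integrable (fun x : ℝ => G x) := by
      have := hInt 0 (by simp)
      simpa using this
    exact intervalIntegral_tendsto_integral h0 tendsto_neg_atTop_atBot tendsto_id
  have hB : Tendsto (fun R : ℝ => ∫ x in (-R)..R, G (x + y₀ * Complex.I)) atTop
      (𝓝 (∫ x : ℝ, G (x + y₀ * Complex.I))) :=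
    intervalIntegral_tendsto_integral (hInt y₀ le_rfl) tendsto_neg_atTop_atBot tendsto_id
  have hq : Tendsto (fun R : ℝ => c * Real.exp (B * R - ε * R ^ 2) * |y₀ - 0|) atTop (𝓝 0) := by
    have q1 : Tendsto (fun R : ℝ => B + -ε * R) atTop atBot := by
      apply tendsto_atBot_add_const_left
      exact Tendsto.const_mul_atTop_of_neg (show -ε < (0:ℝ) by linarith) tendsto_id
    have q2 : Tendsto (fun R : ℝ => R * (B + -ε * R)) atTop atBot :=
      Tendsto.atTop_mul_atBot₀ tendsto_id q1
    have q3 : Tendsto (fun R : ℝ => Real.exp (B * R - ε * R ^ 2)) atTop (𝓝 0) := by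
      have : Tendsto (fun R : ℝ => B * R - ε * R ^ 2) atTop atBot := by
        refine q2.congr (fun R => by ring)
      exact Real.tendsto_exp_atBot.comp this
    have := (q3.const_mul c).mul_const |y₀ - 0|
    simpa using this
  have hV : Tendsto (fun R : ℝ =>
      Complex.I • (∫ y in (0:ℝ)..y₀, G (-R + y * Complex.I)) -
      Complex.I • (∫ y in (0:ℝ)..y₀, G (R + y * Complex.I))) atTop (𝓝 0) := by
    have habs : ∀ y : ℝ, y ∈ Set.uIoc (0:ℝ) y₀ → |y| ≤ |y₀| := by
      intro y hy
      rw [abs_le]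
      refine ⟨le_of_lt (lt_of_le_of_lt (le_min (neg_nonpos.2 (abs_nonneg _)) (neg_abs_le _)) hy.1), hy.2.trans (max_le (abs_nonneg _) (le_abs_self _))⟩
    have hb : ∀ (R : ℝ), 0 ≤ R → ∀ (s : ℝ), (s = R ∨ s = -R) →
        ‖Complex.I • (∫ y in (0:ℝ)..y₀, G (s + y * Complex.I))‖ ≤
          c * Real.exp (B * R - ε * R ^ 2) * |y₀ - 0| := by
      intro R hR s hs
      rw [norm_smul, Complex.norm_I, one_mul]
      refine intervalIntegral.norm_integral_le_of_norm_le_const ?_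
      intro y hy
      have h1 := hbd s y (habs y hy)
      have h2 : |s| = R := by
        rcases hs with h | h
        · rw [h, _root_.abs_of_nonneg hR]
        · rw [h, abs_neg, _root_.abs_of_nonneg hR]
      have h3 : s ^ 2 = R ^ 2 := by rcases hs with h | h <;> rw [h] <;> ring
      rwa [h2, h3] at h1
    refine squeeze_zero_norm' (a := fun R : ℝ => c * Real.exp (B * R - ε * R ^ 2) * |y₀ - 0|
        + c * Real.exp (B * R - ε * R ^ 2) * |y₀ - 0|) ?_ (by simpa using hq.add hq)
    filter_upwards [eventually_ge_atTop (0:ℝ)] with R hR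
    refine (norm_sub_le _ _).trans ?_
    have e1 := hb R hR (-R) (Or.inr rfl)
    have e2 := hb R hR R (Or.inl rfl)
    push_cast at e1 e2
    exact add_le_add e1 e2
  have h1 : Tendsto (fun R : ℝ => (∫ x in (-R)..R, G x) - ∫ x in (-R)..R, G (x + y₀ * Complex.I))
      atTop (𝓝 ((∫ x : ℝ, G x) - ∫ x : ℝ, G (x + y₀ * Complex.I))) := hA.sub hB
  have h2 := tendsto_nhds_unique (h1.congr (fun R => key R)) hV
  have := sub_eq_zero.1 h2
  exact this.symm

set_option maxHeartbeats 1000000 in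
lemma aux_vanish (δ : ℝ) (hδ : 0 < δ) (F : ℂ → ℂ) (hF : Differentiable ℂ F)
    (C : ℝ) (hC : 0 < C) (hbd : ∀ z : ℂ, ‖F z‖ ≤ C * Real.exp ((2 * π * δ + 1) * ‖z‖))
    (hL1 : Integrable (fun x : ℝ => F x)) (ξ : ℝ) (hξ : 3 * δ + 1 ≤ |ξ|) :
    FourierTransform.fourier (fun x : ℝ => F x) ξ = 0 := by
  set a : ℝ := 2 * π * δ + 1 with ha_def
  set b : ℝ := 2 * π * |ξ| with hb_def
  have hπ := Real.pi_gt_three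
  have ha1 : 1 ≤ a := by nlinarith
  have ha0 : 0 < a := by linarith
  have hba : 3 * a ≤ b := by
    have h1 : 2 * π * (3 * δ + 1) ≤ b := by
      have := mul_le_mul_of_nonneg_left hξ (by positivity : (0:ℝ) ≤ 2 * π)
      linarith
    nlinarith
  have hβ : 2 * a ≤ b - a := by linarith
  -- the family of regularized integrands
  set Φ : ℝ → ℂ → ℂ := fun ε z =>
    Complex.exp (-(ε:ℂ) * z ^ 2 + (-2 * (π:ℂ) * (ξ:ℂ) * z) * Complex.I) * F z with hΦ_def
  have hΦdiff : ∀ ε : ℝ, Differentiable ℂ (Φ ε) := by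
    intro ε
    apply Differentiable.mul _ hF
    apply Differentiable.cexp
    apply Differentiable.add
    · exact (differentiable_pow 2).const_mul _
    · exact (differentiable_id.const_mul _).mul_const _
  have hΦnorm : ∀ ε x y : ℝ, ‖Φ ε ((x:ℂ) + (y:ℂ) * Complex.I)‖
      = Real.exp (-ε * (x ^ 2 - y ^ 2) + 2 * π * ξ * y) * ‖F ((x:ℂ) + (y:ℂ) * Complex.I)‖ := by
    intro ε x y
    rw [hΦ_def]
    simp only []
    rw [norm_mul, Complex.norm_exp]
    congr 2
    simp [Complex.add_re, Complex.mul_re, Complex.mul_im, pow_two]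
  have hΦbd : ∀ ε x y : ℝ, ‖Φ ε ((x:ℂ) + (y:ℂ) * Complex.I)‖
      ≤ C * Real.exp (a * |x| - ε * x ^ 2) * Real.exp (a * |y| + ε * y ^ 2 + 2 * π * ξ * y) := by
    intro ε x y
    rw [hΦnorm]
    have h1 : ‖F ((x:ℂ) + (y:ℂ) * Complex.I)‖ ≤ C * Real.exp (a * (|x| + |y|)) := by
      refine (hbd _).trans ?_
      have h2 : ‖(x:ℂ) + (y:ℂ) * Complex.I‖ ≤ |x| + |y| := by
        simpa using Complex.norm_le_abs_re_add_abs_im ((x:ℂ) + (y:ℂ) * Complex.I)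
      exact mul_le_mul_of_nonneg_left (Real.exp_le_exp.2 (by nlinarith)) hC.le
    calc Real.exp (-ε * (x ^ 2 - y ^ 2) + 2 * π * ξ * y) * ‖F ((x:ℂ) + (y:ℂ) * Complex.I)‖
        ≤ Real.exp (-ε * (x ^ 2 - y ^ 2) + 2 * π * ξ * y) * (C * Real.exp (a * (|x| + |y|))) :=
          mul_le_mul_of_nonneg_left h1 (Real.exp_pos _).le
      _ = C * Real.exp (a * |x| - ε * x ^ 2) * Real.exp (a * |y| + ε * y ^ 2 + 2 * π * ξ * y) := by
          simp only [mul_comm, mul_left_comm, mul_assoc, ← Real.exp_add]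
          congr 1
          ring_nf
  have hΦint : ∀ (ε y : ℝ), 0 < ε → Integrable (fun x : ℝ => Φ ε ((x:ℂ) + (y:ℂ) * Complex.I)) := by
    intro ε y hε
    refine ((aux_integrable_exp_quad a ε hε).const_mul
      (C * Real.exp (a * |y| + ε * y ^ 2 + 2 * π * ξ * y))).mono' ?_ ?_
    · exact ((hΦdiff ε).continuous.comp (by continuity)).aestronglyMeasurable
    · filter_upwards with x
      refine (hΦbd ε x y).trans (le_of_eq ?_)
      ring
  have hkey : ∀ ε : ℝ, 0 < ε → ‖∫ x : ℝ, Φ ε x‖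
      ≤ C * Real.sqrt (2 * π / ε) * Real.exp (-1 / (2 * ε)) := by
    intro ε hε
    set s : ℝ := (b - a) / (2 * ε) with hs_def
    have hs0 : 0 ≤ s := div_nonneg (by linarith) (by linarith)
    set y₀ : ℝ := if 0 ≤ ξ then -s else s with hy₀
    have hy₀abs : |y₀| = s := by
      rcases le_or_gt 0 ξ with h | h
      · rw [hy₀, if_pos h, abs_neg, _root_.abs_of_nonneg hs0]
      · rw [hy₀, if_neg (not_le.2 h), _root_.abs_of_nonneg hs0]
    have hy₀sq : y₀ ^ 2 = s ^ 2 := by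
      rcases le_or_gt 0 ξ with h | h
      · rw [hy₀, if_pos h]; ring
      · rw [hy₀, if_neg (not_le.2 h)]
    have hξy₀ : 2 * π * ξ * y₀ = -(b * s) := by
      rcases le_or_gt 0 ξ with h | h
      · rw [hy₀, if_pos h, hb_def, _root_.abs_of_nonneg h]; ring
      · rw [hy₀, if_neg (not_le.2 h), hb_def, abs_of_neg h]; ring
    have hshift : ∫ x : ℝ, Φ ε ((x:ℂ) + (y₀:ℂ) * Complex.I) = ∫ x : ℝ, Φ ε x := by
      apply aux_shift_line (Φ ε) (hΦdiff ε) y₀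
        (C * Real.exp (a * s + ε * s ^ 2 + b * s)) a ε hε
      intro x y hy
      rw [hy₀abs] at hy
      refine (hΦbd ε x y).trans ?_
      have h2 : 2 * π * ξ * y ≤ b * s := by
        calc 2 * π * ξ * y ≤ |2 * π * ξ * y| := le_abs_self _
          _ = b * |y| := by rw [abs_mul, abs_mul, abs_mul]; rw [hb_def]
                            rw [_root_.abs_of_nonneg Real.pi_pos.le]; norm_num
          _ ≤ b * s := mul_le_mul_of_nonneg_left hy (by rw [hb_def]; positivity)
      have h3 : y ^ 2 ≤ s ^ 2 := by
        rw [← _root_.sq_abs y]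
        exact pow_le_pow_left₀ (abs_nonneg y) hy 2
      have hexp : Real.exp (a * |y| + ε * y ^ 2 + 2 * π * ξ * y)
          ≤ Real.exp (a * s + ε * s ^ 2 + b * s) := by
        apply Real.exp_le_exp.2
        linarith [mul_le_mul_of_nonneg_left h3 hε.le, mul_le_mul_of_nonneg_left hy ha0.le, h2]
      calc C * Real.exp (a * |x| - ε * x ^ 2) * Real.exp (a * |y| + ε * y ^ 2 + 2 * π * ξ * y)
          ≤ C * Real.exp (a * |x| - ε * x ^ 2) * Real.exp (a * s + ε * s ^ 2 + b * s) :=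
            mul_le_mul_of_nonneg_left hexp (by positivity)
        _ = C * Real.exp (a * s + ε * s ^ 2 + b * s) * Real.exp (a * |x| - ε * x ^ 2) := by ring
    rw [← hshift]
    have h1 : ‖∫ x : ℝ, Φ ε ((x:ℂ) + (y₀:ℂ) * Complex.I)‖
        ≤ ∫ x : ℝ, C * Real.exp (a * s + ε * s ^ 2 - b * s) * Real.exp (a * |x| - ε * x ^ 2) := by
      refine (norm_integral_le_integral_norm _).trans ?_
      refine integral_mono (hΦint ε y₀ hε).norm
        ((aux_integrable_exp_quad a ε hε).const_mul _) ?_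
      intro x
      refine (hΦbd ε x y₀).trans (le_of_eq ?_)
      rw [hy₀abs, hy₀sq, hξy₀]
      show C * Real.exp (a * |x| - ε * x ^ 2) * Real.exp (a * s + ε * s ^ 2 + -(b * s))
        = C * Real.exp (a * s + ε * s ^ 2 - b * s) * Real.exp (a * |x| - ε * x ^ 2)
      rw [sub_eq_add_neg]
      ring
    refine h1.trans ?_
    rw [MeasureTheory.integral_const_mul]
    have h2 := aux_integral_exp_quad_le a ε hε
    calc C * Real.exp (a * s + ε * s ^ 2 - b * s) * ∫ x : ℝ, Real.exp (a * |x| - ε * x ^ 2)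
        ≤ C * Real.exp (a * s + ε * s ^ 2 - b * s)
          * (Real.exp (a ^ 2 / (2 * ε)) * Real.sqrt (2 * π / ε)) :=
          mul_le_mul_of_nonneg_left h2 (by positivity)
      _ = (C * Real.sqrt (2 * π / ε)) * Real.exp (a * s + ε * s ^ 2 - b * s + a ^ 2 / (2 * ε)) := by
          rw [Real.exp_add]; ring
      _ ≤ (C * Real.sqrt (2 * π / ε)) * Real.exp (-1 / (2 * ε)) := by
          apply mul_le_mul_of_nonneg_left _ (by positivity)
          apply Real.exp_le_exp.2
          have hkey2 : a * s + ε * s ^ 2 - b * s + a ^ 2 / (2 * ε)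
              = (2 * a ^ 2 - (b - a) ^ 2) / (4 * ε) := by
            rw [hs_def]; field_simp; ring
          rw [hkey2, div_le_div_iff₀ (by positivity) (by positivity)]
          have e3 : 4 * a ^ 2 ≤ (b - a) ^ 2 := by
            nlinarith [mul_self_le_mul_self (by linarith : (0:ℝ) ≤ 2 * a) hβ]
          have e4 : 1 ≤ a ^ 2 := by nlinarith
          nlinarith [e3, e4, hε]
      _ = C * Real.sqrt (2 * π / ε) * Real.exp (-1 / (2 * ε)) := by ring
  -- the sequence of regularized integrals
  have hseq : Tendsto (fun n : ℕ => ∫ x : ℝ, Φ (1 / (n + 1)) x) atTop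
      (𝓝 (FourierTransform.fourier (fun x : ℝ => F x) ξ)) := by
    rw [Real.fourier_real_eq_integral_exp_smul]
    refine tendsto_integral_of_dominated_convergence (fun x => ‖F (x:ℂ)‖) ?_ hL1.norm ?_ ?_
    · intro n
      exact ((hΦdiff _).continuous.comp Complex.continuous_ofReal).aestronglyMeasurable
    · intro n
      filter_upwards with x
      have hx0 : Φ (1 / (n + 1)) ((x:ℂ)) = Φ (1 / (n + 1)) ((x:ℂ) + ((0:ℝ):ℂ) * Complex.I) := by
        norm_num
      have hone : Real.exp (-(1 / (n + 1) : ℝ) * (x ^ 2 - 0 ^ 2) + 2 * π * ξ * 0) ≤ 1 := by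
        rw [Real.exp_le_one_iff]
        have h5 : (0:ℝ) ≤ 1 / (n + 1 : ℝ) := by positivity
        nlinarith [sq_nonneg x]
      calc ‖Φ (1 / (n + 1)) ((x:ℂ))‖
          = Real.exp (-(1 / (n + 1) : ℝ) * (x ^ 2 - 0 ^ 2) + 2 * π * ξ * 0)
            * ‖F ((x:ℂ) + ((0:ℝ):ℂ) * Complex.I)‖ := by rw [hx0]; exact hΦnorm _ x 0
        _ ≤ 1 * ‖F ((x:ℂ) + ((0:ℝ):ℂ) * Complex.I)‖ :=
            mul_le_mul_of_nonneg_right hone (norm_nonneg _)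
        _ = ‖F (x:ℂ)‖ := by norm_num
    · filter_upwards with x
      have h1 : Tendsto (fun n : ℕ => ((1 / ((n:ℝ) + 1) : ℝ) : ℂ)) atTop (𝓝 0) := by
        have h2 := (Complex.continuous_ofReal.tendsto (0:ℝ)).comp
          tendsto_one_div_add_atTop_nhds_zero_nat
        simpa [Function.comp_def] using h2
      have h3 : Tendsto (fun n : ℕ => -((1 / ((n:ℝ) + 1) : ℝ) : ℂ) * (x:ℂ) ^ 2
          + (-2 * (π:ℂ) * (ξ:ℂ) * (x:ℂ)) * Complex.I) atTop
          (𝓝 (-(0:ℂ) * (x:ℂ) ^ 2 + (-2 * (π:ℂ) * (ξ:ℂ) * (x:ℂ)) * Complex.I)) := by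
        exact (((h1.neg).mul_const _).add_const _)
      have h4 := ((Complex.continuous_exp.tendsto _).comp h3).mul_const (F (x:ℂ))
      have h5 : Complex.exp (-(0:ℂ) * (x:ℂ) ^ 2 + (-2 * (π:ℂ) * (ξ:ℂ) * (x:ℂ)) * Complex.I)
          * F (x:ℂ) = Complex.exp ((↑(-2 * π * x * ξ) : ℂ) * Complex.I) • F (x:ℂ) := by
        rw [smul_eq_mul]
        congr 2
        push_cast
        ring
      rw [← h5]
      exact h4
  have hzero : Tendsto (fun n : ℕ => ∫ x : ℝ, Φ (1 / (n + 1)) x) atTop (𝓝 0) := by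
    have hcomp : Tendsto (fun n : ℕ => ((n:ℝ) + 1) / 2) atTop atTop := by
      apply Filter.Tendsto.atTop_div_const (by norm_num : (0:ℝ) < 2)
      exact tendsto_atTop_add_const_right _ _ tendsto_natCast_atTop_atTop
    have h4 : Tendsto (fun n : ℕ => (((n:ℝ) + 1) / 2) * Real.exp (-(((n:ℝ) + 1) / 2)))
        atTop (𝓝 0) := by
      have := (tendsto_pow_mul_exp_neg_atTop_nhds_zero 1).comp hcomp
      simpa [Function.comp_def] using this
    have hb0 : Tendsto (fun n : ℕ => 2 * C * Real.sqrt (2 * π)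
        * ((((n:ℝ) + 1) / 2) * Real.exp (-(((n:ℝ) + 1) / 2)))) atTop (𝓝 0) := by
      simpa using h4.const_mul (2 * C * Real.sqrt (2 * π))
    apply squeeze_zero_norm' ?_ hb0
    filter_upwards with n
    have hεn : (0:ℝ) < 1 / ((n:ℝ) + 1) := by positivity
    have hk := hkey (1 / ((n:ℝ) + 1)) hεn
    have e1 : 2 * π / ((1:ℝ) / ((n:ℝ) + 1)) = 2 * π * ((n:ℝ) + 1) := by field_simp
    have e2 : (-1:ℝ) / (2 * ((1:ℝ) / ((n:ℝ) + 1))) = -(((n:ℝ) + 1) / 2) := by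
      field_simp
    rw [e1, e2] at hk
    refine hk.trans ?_
    have hsq : Real.sqrt (2 * π * ((n:ℝ) + 1)) ≤ Real.sqrt (2 * π) * ((n:ℝ) + 1) := by
      rw [Real.sqrt_mul (by positivity)]
      refine mul_le_mul_of_nonneg_left ?_ (Real.sqrt_nonneg _)
      refine (Real.sqrt_le_sqrt (by nlinarith [sq_nonneg ((n:ℝ))] :
        ((n:ℝ) + 1) ≤ ((n:ℝ) + 1) ^ 2)).trans ?_
      rw [Real.sqrt_sq (by positivity)]
    calc C * Real.sqrt (2 * π * ((n:ℝ) + 1)) * Real.exp (-(((n:ℝ) + 1) / 2))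
        ≤ C * (Real.sqrt (2 * π) * ((n:ℝ) + 1)) * Real.exp (-(((n:ℝ) + 1) / 2)) := by
          apply mul_le_mul_of_nonneg_right _ (Real.exp_pos _).le
          exact mul_le_mul_of_nonneg_left hsq hC.le
      _ = 2 * C * Real.sqrt (2 * π) * ((((n:ℝ) + 1) / 2) * Real.exp (-(((n:ℝ) + 1) / 2))) := by
          ring
  exact tendsto_nhds_unique hseq hzero

lemma aux_bounded (δ : ℝ) (hδ : 0 < δ) (F : ℂ → ℂ) (hF : Differentiable ℂ F)
    (htype : ∀ ε > 0, ∃ C : ℝ, ∀ z : ℂ, ‖F z‖ ≤ C * Real.exp ((2 * π * δ + ε) * ‖z‖))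
    (hL1 : Integrable (fun x : ℝ => F x)) :
    ∃ M : ℝ, 0 ≤ M ∧ ∀ x : ℝ, ‖F x‖ ≤ M := by
  obtain ⟨C₀, hC₀⟩ := htype 1 one_pos
  set C := max C₀ 1 with hC_def
  have hC : 0 < C := lt_of_lt_of_le one_pos (le_max_right _ _)
  have hbd : ∀ z : ℂ, ‖F z‖ ≤ C * Real.exp ((2 * π * δ + 1) * ‖z‖) := fun z =>
    (hC₀ z).trans (mul_le_mul_of_nonneg_right (le_max_left _ _) (Real.exp_pos _).le)
  set g := FourierTransform.fourier (fun x : ℝ => F x) with hg_def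
  have hgc : Continuous g :=
    VectorFourier.fourierIntegral_continuous Real.continuous_fourierChar
      (by exact continuous_inner) hL1
  have hg0 : ∀ ξ : ℝ, ξ ∉ Set.Icc (-(3 * δ + 1)) (3 * δ + 1) → g ξ = 0 := by
    intro ξ hξ
    apply aux_vanish δ hδ F hF C hC hbd hL1
    rw [Set.mem_Icc, ← abs_le] at hξ
    exact (not_le.1 hξ).le
  have hsupp : HasCompactSupport g := HasCompactSupport.intro isCompact_Icc hg0
  have hgi : Integrable g := hgc.integrable_of_hasCompactSupport hsupp
  refine ⟨∫ ξ : ℝ, ‖g ξ‖, integral_nonneg (fun _ => norm_nonneg _), ?_⟩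
  intro x
  have hinv : FourierTransformInv.fourierInv g x = F x :=
    MeasureTheory.Integrable.fourierInv_fourier_eq hL1 hgi
      ((hF.continuous.comp Complex.continuous_ofReal).continuousAt)
  rw [← hinv, Real.fourierInv_eq_fourier_neg]
  exact VectorFourier.norm_fourierIntegral_le_integral_norm _ _ _ _ _

lemma aux_radial (N : ℕ) (hN : 0 < N) (g : ℝ → ℂ) (hg : Continuous g)
    (hint : Integrable (fun r : ℝ => ‖g r‖ * |r| ^ (N - 1))) :
    Integrable (fun x : EuclideanSpace ℝ (Fin N) => g ‖x‖) := by
  haveI : Nonempty (Fin N) := ⟨⟨0, hN⟩⟩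
  set E := EuclideanSpace ℝ (Fin N) with hE_def
  haveI : Nontrivial E := by
    refine ⟨0, EuclideanSpace.single ⟨0, hN⟩ 1, fun h => one_ne_zero (α := ℝ) ?_⟩
    have h2 := congrArg (fun v : E => v ⟨0, hN⟩) h.symm
    simp only [EuclideanSpace.single_apply, if_pos rfl] at h2
    exact h2
  have hdim : Module.finrank ℝ E = N := finrank_euclideanSpace_fin
  have hmeas : Measurable fun r : ℝ => (‖g r‖₊ : ENNReal) :=
    hg.measurable.nnnorm.coe_nnreal_ennreal
  have hmeas2 : Measurable fun p : sphere (0:E) 1 × Ioi (0:ℝ) => (‖g p.2‖₊ : ENNReal) :=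
    hmeas.comp (measurable_subtype_coe.comp measurable_snd)
  refine ⟨(hg.comp continuous_norm).aestronglyMeasurable, ?_⟩
  rw [HasFiniteIntegral]
  have mp := (volume : Measure E).measurePreserving_homeomorphUnitSphereProd
  have h1 : ∫⁻ x : E, (‖g ‖x‖‖₊ : ENNReal) ∂volume
      = ∫⁻ x : ({(0:E)}ᶜ : Set E), (‖g ‖(x : E)‖‖₊ : ENNReal)
          ∂((volume : Measure E).comap Subtype.val) := by
    refine ((lintegral_subtype_comap (measurableSet_singleton (0:E)).compl
      (fun a : E => (‖g ‖a‖‖₊ : ENNReal))).trans ?_).symm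
    rw [MeasureTheory.restrict_compl_singleton]
  have h2 : ∫⁻ x : ({(0:E)}ᶜ : Set E), (‖g ‖(x : E)‖‖₊ : ENNReal)
        ∂((volume : Measure E).comap Subtype.val)
      = ∫⁻ p : sphere (0:E) 1 × Ioi (0:ℝ), (‖g p.2‖₊ : ENNReal)
          ∂((volume : Measure E).toSphere.prod
            (.volumeIoiPow (Module.finrank ℝ E - 1))) := by
    calc ∫⁻ x : ({(0:E)}ᶜ : Set E), (‖g ‖(x : E)‖‖₊ : ENNReal)
          ∂((volume : Measure E).comap Subtype.val)
        = ∫⁻ x : ({(0:E)}ᶜ : Set E),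
            (‖g ((homeomorphUnitSphereProd E) x).2‖₊ : ENNReal)
            ∂((volume : Measure E).comap Subtype.val) := by
          refine lintegral_congr fun x => ?_
          congr 2
          simp [homeomorphUnitSphereProd, homeomorphSphereProd_apply_snd_coe]
      _ = ∫⁻ p : sphere (0:E) 1 × Ioi (0:ℝ), (‖g p.2‖₊ : ENNReal)
            ∂(Measure.map (homeomorphUnitSphereProd E)
              ((volume : Measure E).comap Subtype.val)) :=
          (lintegral_map hmeas2 (homeomorphUnitSphereProd E).measurable).symm
      _ = _ := by rw [mp.map_eq]
  have h3 : ∫⁻ p : sphere (0:E) 1 × Ioi (0:ℝ), (‖g p.2‖₊ : ENNReal)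
        ∂((volume : Measure E).toSphere.prod (.volumeIoiPow (Module.finrank ℝ E - 1)))
      = (volume : Measure E).toSphere Set.univ
          * ∫⁻ r : Ioi (0:ℝ), (‖g r‖₊ : ENNReal) ∂(Measure.volumeIoiPow (N - 1)) := by
    rw [lintegral_prod _ hmeas2.aemeasurable, hdim]
    simp only [lintegral_const]
    rw [mul_comm]
  have h4 : ∫⁻ r : Ioi (0:ℝ), (‖g r‖₊ : ENNReal) ∂(Measure.volumeIoiPow (N - 1))
      = ∫⁻ r in Ioi (0:ℝ), ENNReal.ofReal (r ^ (N - 1)) * (‖g r‖₊ : ENNReal) ∂volume := by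
    rw [Measure.volumeIoiPow]
    rw [lintegral_withDensity_eq_lintegral_mul _
      (show Measurable fun r : Ioi (0:ℝ) => ENNReal.ofReal ((r:ℝ) ^ (N - 1)) from
        (measurable_subtype_coe.pow_const _).ennreal_ofReal)
      (show Measurable fun r : Ioi (0:ℝ) => (‖g (r:ℝ)‖₊ : ENNReal) from
        hmeas.comp measurable_subtype_coe)]
    simp only [Pi.mul_apply]
    rw [← lintegral_subtype_comap measurableSet_Ioi
      (fun r : ℝ => ENNReal.ofReal (r ^ (N - 1)) * (‖g r‖₊ : ENNReal))]
  show ∫⁻ x : E, (‖g ‖x‖‖₊ : ENNReal) ∂volume < ⊤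
  rw [h1, h2, h3, h4]
  refine ENNReal.mul_lt_top (measure_lt_top _ _) ?_
  have h5 : ∫⁻ r in Ioi (0:ℝ), ENNReal.ofReal (r ^ (N - 1)) * (‖g r‖₊ : ENNReal) ∂volume
      ≤ ∫⁻ r : ℝ, (‖(‖g r‖ * |r| ^ (N - 1))‖₊ : ENNReal) ∂volume := by
    refine le_trans (le_of_eq ?_) (setLIntegral_le_lintegral (Ioi (0:ℝ)) _)
    refine setLIntegral_congr_fun measurableSet_Ioi ?_
    intro r hr
    rw [mem_Ioi] at hr
    beta_reduce
    rw [← enorm_eq_nnnorm, ← enorm_eq_nnnorm, ← ofReal_norm, ← ofReal_norm,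
      ← ENNReal.ofReal_mul (by positivity)]
    congr 1
    rw [Real.norm_eq_abs, _root_.abs_mul, _root_.abs_pow, _root_.abs_abs,
      _root_.abs_of_nonneg (norm_nonneg _), _root_.abs_of_pos hr]
    ring
  exact lt_of_le_of_lt h5 hint.2


lemma aux_L1 (F : ℂ → ℂ) (hFc : Continuous F) (N : ℕ) (hN : 0 < N)
    (hint : Integrable (fun x : ℝ => ‖F x‖ * |x| ^ (N - 1))) :
    Integrable (fun x : ℝ => F x) := by
  have hc : Continuous fun x : ℝ => F x := hFc.comp Complex.continuous_ofReal
  have h1 : IntegrableOn (fun x : ℝ => F x) (Set.Icc (-1) 1) := hc.integrableOn_Icc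
  have h2 : IntegrableOn (fun x : ℝ => F x) {x : ℝ | 1 ≤ |x|} := by
    have hms : MeasurableSet {x : ℝ | 1 ≤ |x|} :=
      (isClosed_le continuous_const _root_.continuous_abs).measurableSet
    refine Integrable.mono hint.restrict hc.aestronglyMeasurable.restrict ?_
    filter_upwards [ae_restrict_mem hms] with x hx
    have hx1 : (1:ℝ) ≤ |x| := hx
    have hpow : (1:ℝ) ≤ |x| ^ (N - 1) := one_le_pow₀ hx1
    rw [Real.norm_eq_abs (‖F (x:ℂ)‖ * |x| ^ (N - 1)),
      _root_.abs_of_nonneg (by positivity)]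
    nlinarith [norm_nonneg (F (x:ℂ))]
  rw [← integrableOn_univ]
  refine (h1.union h2).mono_set ?_
  intro x _
  rcases le_or_gt (|x|) 1 with h | h
  · exact Or.inl (Set.mem_Icc.2 ⟨(abs_le.1 h).1, (abs_le.1 h).2⟩)
  · exact Or.inr h.le

/-- If `F` is an even entire function of exponential type at most `2πδ` with
`∫_ℝ |F(x)| |x|^{N-1} dx < ∞`, then the radial extension `ψ_N(F) : x ↦ F(|x|)` belongs to
`L¹(ℝ^N) ∩ L²(ℝ^N)`. -/
theorem stmt8 (δ : ℝ) (hδ : 0 < δ) (F : ℂ → ℂ)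
    (hF : Differentiable ℂ F) (hEven : ∀ z : ℂ, F (-z) = F z)
    (htype : ∀ ε > 0, ∃ C : ℝ, ∀ z : ℂ, ‖F z‖ ≤ C * Real.exp ((2 * π * δ + ε) * ‖z‖))
    (N : ℕ) (hN : 0 < N)
    (hint : Integrable (fun x : ℝ => ‖F x‖ * |x| ^ (N - 1))) :
    Integrable (fun x : EuclideanSpace ℝ (Fin N) => F ((‖x‖ : ℝ) : ℂ)) ∧
      MemLp (fun x : EuclideanSpace ℝ (Fin N) => F ((‖x‖ : ℝ) : ℂ)) 2 := by
  have hFc : Continuous F := hF.continuous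
  have hL1R : Integrable (fun x : ℝ => F x) := aux_L1 F hFc N hN hint
  obtain ⟨M, hM0, hM⟩ := aux_bounded δ hδ F hF htype hL1R
  have hL1 : Integrable (fun x : EuclideanSpace ℝ (Fin N) => F ((‖x‖ : ℝ) : ℂ)) :=
    aux_radial N hN (fun r : ℝ => F r) (hFc.comp Complex.continuous_ofReal) hint
  refine ⟨hL1, ?_⟩
  have hcont : Continuous fun x : EuclideanSpace ℝ (Fin N) => F ((‖x‖ : ℝ) : ℂ) :=
    (hFc.comp Complex.continuous_ofReal).comp continuous_norm
  rw [memLp_two_iff_integrable_sq_norm hcont.aestronglyMeasurable]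
  refine (hL1.norm.const_mul M).mono' ?_ ?_
  · exact (hcont.norm.pow 2).aestronglyMeasurable
  · filter_upwards with x
    have h := hM ‖x‖
    rw [Real.norm_eq_abs, _root_.abs_of_nonneg (by positivity)]
    nlinarith [norm_nonneg (F ((‖x‖ : ℝ) : ℂ))]
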